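/- arXiv:1406.1432 — 6 statements merged into one kernel-verified Lean document; each statement's English description precedes it below -/
import Mathlib

section
/- Let Y_1,...,Y_N be i.i.d. strictly positive integrable random variables, let η_i = Y_i / (Y_1 + ... + Y_N), and let b_1 ≥ ... ≥ b_a ≥ 2 be integers with b = b_1 + ... + b_a and a ≤ N. Then E[η_1^{b_1} ⋯ η_a^{b_a}] = (1/Γ(b)) ∫_0^∞ u^{b-1} I_0(u)^{N-a} I_{b_1}(u) ⋯ I_{b_a}(u) du, where I_p(u) = E[Y_1^p e^{-u Y_1}]. -/
/-!
With `S = Y_1 + ⋯ + Y_N` and `c` the exponent vector `(b_1, …, b_a)` extended by zeros to all `N`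
indices, the integrand is `(∏ Y_i ^ c_i) / S ^ b`. Substituting
`S ^ (-b) = Γ(b)⁻¹ ∫_0^∞ u ^ (b - 1) e^{-u S} du` and swapping the integrals (legitimate since the
integrand is nonnegative and `0 ≤ η_i ≤ 1`) leaves `E[∏ Y_i ^ c_i e^{-u Y_i}]` inside, which
independence factors into `∏ I_{c_i}(u)`.
-/

open MeasureTheory ProbabilityTheory Finset

lemma integral_Ioi_pow_mul_exp_neg_mul {B : ℕ} (hB : B ≠ 0) {r : ℝ} (hr : 0 < r) :
    ∫ u in Set.Ioi (0 : ℝ), u ^ (B - 1) * Real.exp (-u * r) = Real.Gamma B / r ^ B := by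
  have hexp : ((B - 1 : ℕ) : ℝ) = (B : ℝ) - 1 := Nat.cast_pred (Nat.pos_of_ne_zero hB)
  rw [div_eq_mul_inv, mul_comm, ← inv_pow, ← one_div, ← Real.rpow_natCast (1 / r),
    ← Real.integral_rpow_mul_exp_neg_mul_Ioi (by positivity) hr]
  refine setIntegral_congr_fun measurableSet_Ioi fun u _ => ?_
  rw [← hexp, Real.rpow_natCast, neg_mul, mul_comm u]

lemma integrableOn_Ioi_pow_mul_exp_neg_mul (B : ℕ) {r : ℝ} (hr : 0 < r) :
    IntegrableOn (fun u : ℝ => u ^ B * Real.exp (-u * r)) (Set.Ioi 0) := by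
  refine (integrableOn_rpow_mul_exp_neg_mul_rpow (s := B) (p := 1)
    (by linarith [B.cast_nonneg (α := ℝ)]) one_pos hr).congr_fun
    (fun u _ => ?_) measurableSet_Ioi
  simp only [Real.rpow_natCast, Real.rpow_one, neg_mul, mul_comm u]

lemma integral_Ioi_pow_mul_mul_exp_neg_mul {B : ℕ} (hB : B ≠ 0) (x : ℝ) {r : ℝ} (hr : 0 < r) :
    ∫ u in Set.Ioi (0 : ℝ), u ^ (B - 1) * (x * Real.exp (-u * r)) =
      Real.Gamma B * (x / r ^ B) := by
  simp_rw [mul_left_comm _ x]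
  rw [integral_const_mul, integral_Ioi_pow_mul_exp_neg_mul hB hr]
  ring

lemma integral_div_pow_eq_integral_Ioi {Ω : Type*} [MeasurableSpace Ω] {μ : Measure Ω} [SFinite μ]
    {Φ S : Ω → ℝ} {B : ℕ} (hB : B ≠ 0) (hΦ : Measurable Φ) (hS : Measurable S)
    (hΦ0 : ∀ᵐ ω ∂μ, 0 ≤ Φ ω) (hS0 : ∀ᵐ ω ∂μ, 0 < S ω)
    (hint : Integrable (fun ω => Φ ω / S ω ^ B) μ) :
    ∫ ω, Φ ω / S ω ^ B ∂μ =
      1 / Real.Gamma B * ∫ u in Set.Ioi (0 : ℝ), u ^ (B - 1) * ∫ ω, Φ ω * Real.exp (-u * S ω) ∂μ := by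
  set F : Ω → ℝ → ℝ := fun ω u => u ^ (B - 1) * (Φ ω * Real.exp (-u * S ω))
  have hF_meas : Measurable (Function.uncurry F) := by
    simp only [F, Function.uncurry_def]; fun_prop
  have hF : Integrable (Function.uncurry F) (μ.prod (volume.restrict (Set.Ioi 0))) := by
    rw [integrable_prod_iff hF_meas.aestronglyMeasurable]
    constructor
    · filter_upwards [hS0] with ω hω
      simpa only [F, Function.uncurry_apply_pair, mul_left_comm _ (Φ ω)] using
        (integrableOn_Ioi_pow_mul_exp_neg_mul (B - 1) hω).const_mul (Φ ω)
    · refine (hint.const_mul (Real.Gamma B)).congr ?_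
      filter_upwards [hS0, hΦ0] with ω hSω hΦω
      rw [← integral_Ioi_pow_mul_mul_exp_neg_mul hB _ hSω]
      refine setIntegral_congr_fun measurableSet_Ioi fun u hu => ?_
      have hu : 0 < u := hu
      exact (Real.norm_of_nonneg (by positivity)).symm
  calc ∫ ω, Φ ω / S ω ^ B ∂μ = ∫ ω, 1 / Real.Gamma B * (∫ u in Set.Ioi (0 : ℝ), F ω u) ∂μ := by
        refine integral_congr_ae ?_
        filter_upwards [hS0] with ω hω
        rw [integral_Ioi_pow_mul_mul_exp_neg_mul hB _ hω]
        field_simp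
    _ = 1 / Real.Gamma B * ∫ u in Set.Ioi (0 : ℝ), ∫ ω, F ω u ∂μ := by
        rw [integral_const_mul, integral_integral_swap hF]
    _ = _ := by simp only [F, integral_const_mul]

lemma ProbabilityTheory.iIndepFun.integral_prod_pow_mul_exp_neg_mul_sum {Ω : Type*}
    [MeasurableSpace Ω] {μ : Measure Ω} {ι : Type*} [Fintype ι] {Y : ι → Ω → ℝ}
    (hindep : iIndepFun Y μ) (hmeas : ∀ i, Measurable (Y i)) (c : ι → ℕ) (u : ℝ) :
    ∫ ω, (∏ i, Y i ω ^ c i) * Real.exp (-u * ∑ i, Y i ω) ∂μ =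
      ∏ i, ∫ ω, Y i ω ^ c i * Real.exp (-u * Y i ω) ∂μ := by
  simp_rw [mul_sum, Real.exp_sum, ← prod_mul_distrib]
  exact hindep.integral_fun_prod_comp (f := fun i y => y ^ c i * Real.exp (-u * y))
    (fun i => (hmeas i).aemeasurable) (fun i => by fun_prop)

theorem ProbabilityTheory.iIndepFun.integral_prod_div_sum_pow {Ω : Type*} [MeasurableSpace Ω]
    {μ : Measure Ω} {ι : Type*} [Fintype ι] {Y : ι → Ω → ℝ} (hindep : iIndepFun Y μ)
    (hmeas : ∀ i, Measurable (Y i)) (hpos : ∀ i, ∀ᵐ ω ∂μ, 0 < Y i ω) {c : ι → ℕ}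
    (hc : ∑ i, c i ≠ 0) :
    ∫ ω, ∏ i, (Y i ω / ∑ k, Y k ω) ^ c i ∂μ =
      1 / Real.Gamma ((∑ i, c i : ℕ) : ℝ) * ∫ u in Set.Ioi (0 : ℝ),
        u ^ (∑ i, c i - 1) * ∏ i, ∫ ω, Y i ω ^ c i * Real.exp (-u * Y i ω) ∂μ := by
  have := hindep.isProbabilityMeasure
  obtain ⟨i₀, -, -⟩ := exists_ne_zero_of_sum_ne_zero hc
  have hY : ∀ᵐ ω ∂μ, ∀ i, 0 < Y i ω := ae_all_iff.2 hpos
  have hS : ∀ᵐ ω ∂μ, 0 < ∑ k, Y k ω := by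
    filter_upwards [hY] with ω hω
    exact sum_pos (fun i _ => hω i) ⟨i₀, mem_univ _⟩
  have hint : Integrable (fun ω => ∏ i, (Y i ω / ∑ k, Y k ω) ^ c i) μ := by
    refine .of_bound (Measurable.aestronglyMeasurable (by fun_prop)) 1 ?_
    filter_upwards [hY, hS] with ω hω hSω
    have hfrac : ∀ i, 0 ≤ Y i ω / ∑ k, Y k ω := fun i => div_nonneg (hω i).le hSω.le
    rw [Real.norm_of_nonneg (prod_nonneg fun i _ => pow_nonneg (hfrac i) _)]
    refine prod_le_one (fun i _ => pow_nonneg (hfrac i) _) fun i _ => pow_le_one₀ (hfrac i) ?_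
    exact div_le_one_of_le₀ (single_le_sum (fun k _ => (hω k).le) (mem_univ i)) hSω.le
  simp_rw [div_pow, prod_div_distrib, prod_pow_eq_pow_sum] at hint ⊢
  rw [integral_div_pow_eq_integral_Ioi hc (by fun_prop) (by fun_prop)
    (by filter_upwards [hY] with ω hω using prod_nonneg fun i _ => pow_nonneg (hω i).le _) hS hint]
  simp_rw [hindep.integral_prod_pow_mul_exp_neg_mul_sum hmeas]

@[to_additive]
lemma Fintype.prod_extend_eq_prod_compl_mul_prod {M ι κ α : Type*} [CommMonoid M] [Fintype ι]
    [Fintype κ] [DecidableEq ι] (e : κ ↪ ι) (b : κ → α) (g : ι → α) (f : ι → α → M) :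
    ∏ i, f i (Function.extend e b g i) = (∏ i ∈ (univ.map e)ᶜ, f i (g i)) * ∏ k, f (e k) (b k) := by
  rw [← prod_compl_mul_prod (univ.map e), prod_map]
  congr 1
  · refine Finset.prod_congr rfl fun i hi => ?_
    rw [Function.extend_apply']
    simpa using hi
  · exact Finset.prod_congr rfl fun k _ => by rw [e.injective.extend_apply]

theorem stmt_1_general {Ω : Type*} [MeasurableSpace Ω] (P : Measure Ω)
    (N a : ℕ) (hN : 0 < N) (ha : 0 < a) (haN : a ≤ N)
    (bv : Fin a → ℕ) (hb2 : ∀ j, 2 ≤ bv j)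
    (B : ℕ) (hB : B = ∑ j, bv j)
    (Y : Fin N → Ω → ℝ) (hmeas : ∀ i, Measurable (Y i))
    (hindep : iIndepFun Y P)
    (hident : ∀ i, IdentDistrib (Y i) (Y ⟨0, hN⟩) P P)
    (hpos : ∀ i, ∀ᵐ ω ∂P, 0 < Y i ω) :
    ∫ ω, (∏ j : Fin a, (Y (Fin.castLE haN j) ω / ∑ i, Y i ω) ^ bv j) ∂P =
      (1 / Real.Gamma B) *
        ∫ u in Set.Ioi (0 : ℝ),
          u ^ (B - 1) * (∫ ω, Real.exp (-u * Y ⟨0, hN⟩ ω) ∂P) ^ (N - a) *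
            ∏ j : Fin a, ∫ ω, (Y ⟨0, hN⟩ ω) ^ bv j * Real.exp (-u * Y ⟨0, hN⟩ ω) ∂P := by
  classical
  set e := Fin.castLEEmb haN
  set c := Function.extend e bv 0
  have hc : ∑ i, c i = B := by
    simpa [hB] using Fintype.sum_extend_eq_sum_compl_add_sum e bv 0 fun _ n => n
  have hB0 : B ≠ 0 := by
    have := single_le_sum (fun j _ => Nat.zero_le (bv j)) (mem_univ ⟨0, ha⟩)
    have := hb2 ⟨0, ha⟩
    omega
  have hlhs (ω : Ω) : ∏ j, (Y (Fin.castLE haN j) ω / ∑ i, Y i ω) ^ bv j =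
      ∏ i, (Y i ω / ∑ k, Y k ω) ^ c i := by
    simpa [c, e] using (Fintype.prod_extend_eq_prod_compl_mul_prod e bv 0
      fun i n => (Y i ω / ∑ k, Y k ω) ^ n).symm
  have hmoment (u : ℝ) (n : ℕ) (i : Fin N) :
      ∫ ω, Y i ω ^ n * Real.exp (-u * Y i ω) ∂P =
        ∫ ω, Y ⟨0, hN⟩ ω ^ n * Real.exp (-u * Y ⟨0, hN⟩ ω) ∂P :=
    ((hident i).comp (by fun_prop : Measurable fun y : ℝ => y ^ n * Real.exp (-u * y))).integral_eq
  have hrhs (u : ℝ) : ∏ i, ∫ ω, Y i ω ^ c i * Real.exp (-u * Y i ω) ∂P =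
      (∫ ω, Real.exp (-u * Y ⟨0, hN⟩ ω) ∂P) ^ (N - a) *
        ∏ j, ∫ ω, Y ⟨0, hN⟩ ω ^ bv j * Real.exp (-u * Y ⟨0, hN⟩ ω) ∂P := by
    simp_rw [hmoment u]
    rw [Fintype.prod_extend_eq_prod_compl_mul_prod e bv 0
      fun _ n => ∫ ω, Y ⟨0, hN⟩ ω ^ n * Real.exp (-u * Y ⟨0, hN⟩ ω) ∂P]
    simp [card_compl, e]
  simp_rw [hlhs]
  rw [hindep.integral_prod_div_sum_pow hmeas hpos (hc ▸ hB0), hc]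
  congr 1
  refine setIntegral_congr_fun measurableSet_Ioi fun u _ => ?_
  rw [hrhs u, mul_assoc]

/-- Integral representation of the joint moments of `η_i = Y_i / (Y_1 + ⋯ + Y_N)` for
i.i.d. positive integrable `Y_i`:
`E[η_1^{b_1} ⋯ η_a^{b_a}] = (1/Γ(b)) ∫_0^∞ u^{b-1} I_0(u)^{N-a} I_{b_1}(u) ⋯ I_{b_a}(u) du`
where `I_p(u) = E[Y_1^p e^{-u Y_1}]`. -/
theorem stmt_1 {Ω : Type*} [MeasurableSpace Ω] (P : Measure Ω) [IsProbabilityMeasure P]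
    (N a : ℕ) (hN : 0 < N) (ha : 0 < a) (haN : a ≤ N)
    (bv : Fin a → ℕ) (hmono : Antitone bv) (hb2 : ∀ j, 2 ≤ bv j)
    (B : ℕ) (hB : B = ∑ j, bv j)
    (Y : Fin N → Ω → ℝ) (hmeas : ∀ i, Measurable (Y i))
    (hindep : iIndepFun Y P)
    (hident : ∀ i, IdentDistrib (Y i) (Y ⟨0, hN⟩) P P)
    (hpos : ∀ i, ∀ᵐ ω ∂P, 0 < Y i ω)
    (hint : Integrable (Y ⟨0, hN⟩) P) :
    ∫ ω, (∏ j : Fin a, (Y (Fin.castLE haN j) ω / ∑ i, Y i ω) ^ bv j) ∂P =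
      (1 / Real.Gamma B) *
        ∫ u in Set.Ioi (0 : ℝ),
          u ^ (B - 1) * (∫ ω, Real.exp (-u * Y ⟨0, hN⟩ ω) ∂P) ^ (N - a) *
            ∏ j : Fin a, ∫ ω, (Y ⟨0, hN⟩ ω) ^ bv j * Real.exp (-u * Y ⟨0, hN⟩ ω) ∂P :=
  stmt_1_general P N a hN ha haN bv hb2 B hB Y hmeas hindep hident hpos
end

section
/- Let Y_1, Y_2, ... be i.i.d. strictly positive random variables with E[Y_1^2] < ∞, and for each N let η_1^{(N)} = Y_1 / (Y_1 + ... + Y_N). Then lim_{N→∞} N^2 · E[(η_1^{(N)})^2] = E[Y_1^2] / (E[Y_1])^2. -/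
/-!
Write `μ = E[Y₁]` and `S_N = Y₁ + ⋯ + Y_N`. Since `N² (Y₁ / S_N)² = Y₁² / (S_N / N)²`, the strong
law of large numbers gives pointwise convergence to `Y₁² / μ²`. On the event `S_N > μ N / 2` the
integrand is dominated by `4 Y₁² / μ²`, so dominated convergence applies there. On the complement
the integrand is at most `N²` (as `Y₁ ≤ S_N`), while a Chernoff bound, with the Laplace transform
controlled through `e^{-x} ≤ 1 - x + x²` for `x ≥ 0`, makes `P(S_N ≤ μ N / 2)` decay geometrically.
-/

open MeasureTheory ProbabilityTheory Filter Finset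
open scoped Topology Function

theorem Real.exp_neg_le_one_sub_add_sq {x : ℝ} (hx : 0 ≤ x) :
    Real.exp (-x) ≤ 1 - x + x ^ 2 := by
  have hx1 : 0 < 1 + x := by linarith
  calc Real.exp (-x) = (Real.exp x)⁻¹ := Real.exp_neg x
    _ ≤ (1 + x)⁻¹ := inv_anti₀ hx1 (by linarith [Real.add_one_le_exp x])
    _ ≤ 1 - x + x ^ 2 := by
      rw [inv_le_iff_one_le_mul₀' hx1]
      nlinarith [sq_nonneg x]

theorem sq_div_sum_range_le_one {y : ℕ → ℝ} (hy : ∀ j, 0 ≤ y j) (N : ℕ) :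
    (y 0 / ∑ j ∈ range N, y j) ^ 2 ≤ 1 := by
  cases N with
  | zero => simp
  | succ N =>
    have hle : y 0 ≤ ∑ j ∈ range (N + 1), y j :=
      single_le_sum (fun j _ => hy j) (mem_range.mpr N.succ_pos)
    exact pow_le_one₀ (div_nonneg (hy 0) (sum_nonneg fun j _ => hy j))
      (div_le_one_of_le₀ hle ((hy 0).trans hle))

theorem norm_sq_mul_sq_div_sum_range_le {y : ℕ → ℝ} (hy : ∀ j, 0 ≤ y j) (N : ℕ) :
    ‖(N : ℝ) ^ 2 * (y 0 / ∑ j ∈ range N, y j) ^ 2‖ ≤ (N : ℝ) ^ 2 := by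
  rw [Real.norm_of_nonneg (by positivity)]
  simpa using mul_le_mul_of_nonneg_left (sq_div_sum_range_le_one hy N) (sq_nonneg (N : ℝ))

theorem sq_mul_sq_div_le_sq_div_sq {a n s : ℝ} (ha : 0 < a) (hn : 0 ≤ n) (hs : a * n < s)
    (y : ℝ) : n ^ 2 * (y / s) ^ 2 ≤ y ^ 2 / a ^ 2 := by
  have hs0 : 0 < s := lt_of_le_of_lt (by positivity) hs
  have hns : n / s ≤ 1 / a := by
    rw [div_le_div_iff₀ hs0 ha]; linarith
  calc n ^ 2 * (y / s) ^ 2 = (n / s) ^ 2 * y ^ 2 := by ring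
    _ ≤ (1 / a) ^ 2 * y ^ 2 := by gcongr
    _ = y ^ 2 / a ^ 2 := by ring

theorem sq_mul_sq_div_eq_sq_div_sq_inv_mul (n s y : ℝ) :
    n ^ 2 * (y / s) ^ 2 = y ^ 2 / (n⁻¹ * s) ^ 2 := by
  simp only [div_eq_mul_inv, mul_pow, inv_pow, mul_inv, inv_inv]; ring

theorem integral_pos_of_ae_pos {α : Type*} [MeasurableSpace α] {μ : Measure α} [NeZero μ]
    {f : α → ℝ} (hf : ∀ᵐ x ∂μ, 0 < f x) (hfi : Integrable f μ) : 0 < ∫ x, f x ∂μ := by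
  rw [integral_pos_iff_support_of_nonneg_ae (hf.mono fun _ h => h.le) hfi, pos_iff_ne_zero]
  intro h
  obtain ⟨x, hx, hx'⟩ := (hf.and (measure_eq_zero_iff_ae_notMem.mp h)).exists
  exact hx' hx.ne'

theorem MeasureTheory.Integrable.of_integrable_sq {α : Type*} [MeasurableSpace α] {μ : Measure α}
    [IsFiniteMeasure μ] {f : α → ℝ} (hf : AEStronglyMeasurable f μ)
    (hsq : Integrable (fun x => f x ^ 2) μ) : Integrable f μ :=
  ((memLp_two_iff_integrable_sq hf).mpr hsq).integrable one_le_two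

section IID

variable {Ω : Type*} [MeasurableSpace Ω] {P : Measure Ω} {Y : ℕ → Ω → ℝ}

theorem mgf_neg_le_exp [IsProbabilityMeasure P] {X : Ω → ℝ} (hX : AEMeasurable X P)
    (hX0 : ∀ᵐ ω ∂P, 0 ≤ X ω) (hsq : Integrable (fun ω => X ω ^ 2) P) {t : ℝ} (ht : 0 ≤ t) :
    mgf X P (-t) ≤ Real.exp (-t * ∫ ω, X ω ∂P + t ^ 2 * ∫ ω, X ω ^ 2 ∂P) := by
  have hXi : Integrable X P := .of_integrable_sq hX.aestronglyMeasurable hsq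
  have hlin : Integrable (fun ω => 1 - t * X ω) P := (integrable_const 1).sub (hXi.const_mul t)
  have hquad : Integrable (fun ω => 1 - t * X ω + t ^ 2 * X ω ^ 2) P :=
    hlin.add (hsq.const_mul _)
  have hexp : Integrable (fun ω => Real.exp (-t * X ω)) P := by
    refine .of_mem_Icc 0 1 (Real.measurable_exp.comp_aemeasurable (hX.const_mul _)) ?_
    filter_upwards [hX0] with ω hω
    exact ⟨(Real.exp_pos _).le, Real.exp_le_one_iff.mpr (by nlinarith)⟩
  calc mgf X P (-t) ≤ ∫ ω, (1 - t * X ω + t ^ 2 * X ω ^ 2) ∂P := by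
        refine integral_mono_ae hexp hquad ?_
        filter_upwards [hX0] with ω hω
        simpa [neg_mul, mul_pow] using Real.exp_neg_le_one_sub_add_sq (mul_nonneg ht hω)
    _ = 1 + (-t * ∫ ω, X ω ∂P + t ^ 2 * ∫ ω, X ω ^ 2 ∂P) := by
        rw [integral_add hlin (hsq.const_mul _), integral_sub (integrable_const 1)
          (hXi.const_mul t), integral_const_mul, integral_const_mul]
        simp only [integral_const, probReal_univ, smul_eq_mul, one_mul]
        ring
    _ ≤ _ := by linarith [Real.add_one_le_exp (-t * ∫ ω, X ω ∂P + t ^ 2 * ∫ ω, X ω ^ 2 ∂P)]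

theorem measureReal_sum_range_le_le_exp_pow [IsProbabilityMeasure P]
    (hmeas : ∀ i, Measurable (Y i))
    (hindep : iIndepFun Y P) (hident : ∀ i, IdentDistrib (Y i) (Y 0) P P)
    (hnonneg : ∀ i, ∀ᵐ ω ∂P, 0 ≤ Y i ω) (hsq : Integrable (fun ω => Y 0 ω ^ 2) P)
    {t : ℝ} (ht : 0 ≤ t) (a : ℝ) (N : ℕ) :
    P.real {ω | ∑ j ∈ range N, Y j ω ≤ a * N} ≤
      Real.exp (t * a - t * ∫ ω, Y 0 ω ∂P + t ^ 2 * ∫ ω, Y 0 ω ^ 2 ∂P) ^ N := by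
  have hS0 : ∀ᵐ ω ∂P, 0 ≤ ∑ j ∈ range N, Y j ω := by
    filter_upwards [ae_all_iff.mpr hnonneg] with ω hω
    exact sum_nonneg fun j _ => hω j
  have hexp : Integrable (fun ω => Real.exp (-t * ∑ j ∈ range N, Y j ω)) P := by
    refine .of_mem_Icc 0 1 (Real.measurable_exp.comp_aemeasurable
      ((measurable_sum _ fun j _ => hmeas j).aemeasurable.const_mul _)) ?_
    filter_upwards [hS0] with ω hω
    exact ⟨(Real.exp_pos _).le, Real.exp_le_one_iff.mpr (by nlinarith)⟩
  have hmgf : mgf (∑ j ∈ range N, Y j) P (-t) = mgf (Y 0) P (-t) ^ N := by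
    rw [hindep.mgf_sum hmeas, prod_congr rfl fun j _ =>
      mgf_congr_of_identDistrib _ _ (hident j) (-t), prod_const, card_range]
  have hchernoff := measure_le_le_exp_mul_mgf (X := ∑ j ∈ range N, Y j) (a * N)
    (neg_nonpos.mpr ht) (by simpa only [Finset.sum_apply] using hexp)
  simp only [Finset.sum_apply, hmgf] at hchernoff
  set B := -t * ∫ ω, Y 0 ω ∂P + t ^ 2 * ∫ ω, Y 0 ω ^ 2 ∂P
  calc _ ≤ Real.exp (-(-t) * (a * N)) * mgf (Y 0) P (-t) ^ N := hchernoff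
    _ ≤ Real.exp (-(-t) * (a * N)) * Real.exp B ^ N := by
        gcongr
        · exact mgf_nonneg
        exact mgf_neg_le_exp (hmeas 0).aemeasurable (hnonneg 0) hsq ht
    _ = _ := by
        rw [← Real.exp_nat_mul, ← Real.exp_add, ← Real.exp_nat_mul]
        simp only [B]
        ring_nf

theorem exists_measureReal_sum_range_le_half_mean_le_pow [IsProbabilityMeasure P]
    (hmeas : ∀ i, Measurable (Y i))
    (hindep : iIndepFun Y P) (hident : ∀ i, IdentDistrib (Y i) (Y 0) P P)
    (hnonneg : ∀ i, ∀ᵐ ω ∂P, 0 ≤ Y i ω) (hsq : Integrable (fun ω => Y 0 ω ^ 2) P)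
    (hμ : 0 < ∫ ω, Y 0 ω ∂P) :
    ∃ ρ, 0 ≤ ρ ∧ ρ < 1 ∧ ∀ N : ℕ,
      P.real {ω | ∑ j ∈ range N, Y j ω ≤ (∫ ω, Y 0 ω ∂P) / 2 * N} ≤ ρ ^ N := by
  set μ := ∫ ω, Y 0 ω ∂P
  set m := ∫ ω, Y 0 ω ^ 2 ∂P
  have hm : 0 < m := by
    have hvar := variance_nonneg (Y 0) P
    rw [variance_eq_sub ((memLp_two_iff_integrable_sq (hmeas 0).aestronglyMeasurable).mpr hsq)]
      at hvar
    simp only [Pi.pow_apply] at hvar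
    nlinarith
  -- at `a = μ / 2` the exponent `t (a - μ) + t² m` is minimal, `-μ² / (16 m)`, at `t = μ / (4 m)`
  refine ⟨Real.exp (-(μ ^ 2 / (16 * m))), (Real.exp_pos _).le,
    Real.exp_lt_one_iff.mpr (neg_neg_of_pos (by positivity)), fun N => ?_⟩
  convert measureReal_sum_range_le_le_exp_pow hmeas hindep hident hnonneg hsq
    (t := μ / (4 * m)) (by positivity) (μ / 2) N using 3
  field_simp
  ring

theorem tendsto_setIntegral_sq_mul_sq_div_sum_range [IsFiniteMeasure P]
    (hmeas : ∀ i, Measurable (Y i))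
    (hindep : Pairwise ((· ⟂ᵢ[P] ·) on Y)) (hident : ∀ i, IdentDistrib (Y i) (Y 0) P P)
    (hsq : Integrable (fun ω => Y 0 ω ^ 2) P) {a : ℝ} (ha : 0 < a) (haμ : a < ∫ ω, Y 0 ω ∂P) :
    Tendsto (fun N : ℕ => ∫ ω in {ω | a * N < ∑ j ∈ range N, Y j ω},
        (N : ℝ) ^ 2 * (Y 0 ω / ∑ j ∈ range N, Y j ω) ^ 2 ∂P)
      atTop (𝓝 ((∫ ω, Y 0 ω ^ 2 ∂P) / (∫ ω, Y 0 ω ∂P) ^ 2)) := by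
  have hS : ∀ N, Measurable fun ω => ∑ j ∈ range N, Y j ω :=
    fun N => Finset.measurable_sum _ fun j _ => hmeas j
  have hA : ∀ N : ℕ, MeasurableSet {ω | a * N < ∑ j ∈ range N, Y j ω} :=
    fun N => measurableSet_lt measurable_const (hS N)
  refine (tendsto_congr fun N => (integral_indicator (hA N)).symm).mpr ?_
  rw [← integral_div]
  refine tendsto_integral_of_dominated_convergence (fun ω => Y 0 ω ^ 2 / a ^ 2)
    (fun N => (Measurable.indicator (by fun_prop) (hA N)).aestronglyMeasurable)
    (hsq.div_const _) (fun N => ae_of_all _ fun ω => ?_) ?_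
  · rw [Set.indicator_apply]
    split_ifs with hω
    · rw [Real.norm_of_nonneg (by positivity)]
      exact sq_mul_sq_div_le_sq_div_sq ha N.cast_nonneg hω _
    · rw [norm_zero]
      positivity
  · filter_upwards [strong_law_ae Y (.of_integrable_sq (hmeas 0).aestronglyMeasurable hsq)
      hindep hident] with ω hω
    simp only [smul_eq_mul] at hω
    refine (tendsto_const_nhds.div (hω.pow 2) (pow_ne_zero 2 (ha.trans haμ).ne')).congr' ?_
    filter_upwards [hω.eventually (lt_mem_nhds haμ), eventually_gt_atTop 0] with N hN hN0
    have hmem : ω ∈ {ω | a * N < ∑ j ∈ range N, Y j ω} :=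
      (lt_inv_mul_iff₀' (Nat.cast_pos.mpr hN0)).mp hN
    rw [Set.indicator_of_mem hmem, sq_mul_sq_div_eq_sq_div_sq_inv_mul, Pi.div_apply]

theorem integral_sq_mul_sq_div_sum_range_eq_add [IsFiniteMeasure P]
    (hmeas : ∀ i, Measurable (Y i))
    (hnonneg : ∀ i, ∀ᵐ ω ∂P, 0 ≤ Y i ω) (a : ℝ) (N : ℕ) :
    (N : ℝ) ^ 2 * ∫ ω, (Y 0 ω / ∑ j ∈ range N, Y j ω) ^ 2 ∂P =
      (∫ ω in {ω | a * N < ∑ j ∈ range N, Y j ω},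
        (N : ℝ) ^ 2 * (Y 0 ω / ∑ j ∈ range N, Y j ω) ^ 2 ∂P) +
      ∫ ω in {ω | ∑ j ∈ range N, Y j ω ≤ a * N},
        (N : ℝ) ^ 2 * (Y 0 ω / ∑ j ∈ range N, Y j ω) ^ 2 ∂P := by
  have hS : Measurable fun ω => ∑ j ∈ range N, Y j ω :=
    Finset.measurable_sum _ fun j _ => hmeas j
  have hA : MeasurableSet {ω | a * N < ∑ j ∈ range N, Y j ω} :=
    measurableSet_lt measurable_const hS
  have hint : Integrable (fun ω => (N : ℝ) ^ 2 * (Y 0 ω / ∑ j ∈ range N, Y j ω) ^ 2) P := by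
    refine .of_bound ((((hmeas 0).div hS).pow_const 2).const_mul _).aestronglyMeasurable
      ((N : ℝ) ^ 2) ?_
    filter_upwards [ae_all_iff.mpr hnonneg] with ω hω
    exact norm_sq_mul_sq_div_sum_range_le hω N
  rw [← integral_const_mul, ← integral_add_compl hA hint]
  simp only [Set.compl_ofPred, not_lt]

theorem tendsto_setIntegral_sq_mul_sq_div_sum_range_le [IsFiniteMeasure P]
    (hnonneg : ∀ i, ∀ᵐ ω ∂P, 0 ≤ Y i ω)
    {a ρ : ℝ} (hρ0 : 0 ≤ ρ) (hρ1 : ρ < 1)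
    (htail : ∀ N : ℕ, P.real {ω | ∑ j ∈ range N, Y j ω ≤ a * N} ≤ ρ ^ N) :
    Tendsto (fun N : ℕ => ∫ ω in {ω | ∑ j ∈ range N, Y j ω ≤ a * N},
      (N : ℝ) ^ 2 * (Y 0 ω / ∑ j ∈ range N, Y j ω) ^ 2 ∂P) atTop (𝓝 0) := by
  refine squeeze_zero (fun N => integral_nonneg fun ω => by positivity) (fun N => ?_)
    (tendsto_pow_const_mul_const_pow_of_lt_one 2 hρ0 hρ1)
  refine (Real.le_norm_self _).trans <| (norm_setIntegral_le_of_norm_le_const_ae'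
    (measure_lt_top P _) ?_).trans (mul_le_mul_of_nonneg_left (htail N) (by positivity))
  filter_upwards [ae_all_iff.mpr hnonneg] with ω hω _
  exact norm_sq_mul_sq_div_sum_range_le hω N

end IID

/-- If `Y_1, Y_2, …` are i.i.d. positive square-integrable and
`η_1^{(N)} = Y_1 / (Y_1 + ⋯ + Y_N)`, then `N² E[(η_1^{(N)})²] → E[Y_1²]/E[Y_1]²`. -/
theorem stmt_8 {Ω : Type*} [MeasurableSpace Ω] (P : Measure Ω) [IsProbabilityMeasure P]
    (Y : ℕ → Ω → ℝ) (hmeas : ∀ i, Measurable (Y i))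
    (hindep : iIndepFun Y P)
    (hident : ∀ i, IdentDistrib (Y i) (Y 0) P P)
    (hpos : ∀ i, ∀ᵐ ω ∂P, 0 < Y i ω)
    (hsq : Integrable (fun ω => (Y 0 ω) ^ 2) P) :
    Tendsto (fun N : ℕ =>
        (N : ℝ) ^ 2 * ∫ ω, (Y 0 ω / ∑ j ∈ Finset.range N, Y j ω) ^ 2 ∂P)
      atTop
      (nhds ((∫ ω, (Y 0 ω) ^ 2 ∂P) / (∫ ω, Y 0 ω ∂P) ^ 2)) := by
  have hμ : 0 < ∫ ω, Y 0 ω ∂P :=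
    integral_pos_of_ae_pos (hpos 0) (.of_integrable_sq (hmeas 0).aestronglyMeasurable hsq)
  have hnonneg : ∀ i, ∀ᵐ ω ∂P, 0 ≤ Y i ω := fun i => (hpos i).mono fun _ h => h.le
  obtain ⟨ρ, hρ0, hρ1, htail⟩ :=
    exists_measureReal_sum_range_le_half_mean_le_pow hmeas hindep hident hnonneg hsq hμ
  have hgood := tendsto_setIntegral_sq_mul_sq_div_sum_range hmeas
    (fun i j hij => hindep.indepFun hij) hident hsq (half_pos hμ) (half_lt_self hμ)
  have hbad := tendsto_setIntegral_sq_mul_sq_div_sum_range_le hnonneg hρ0 hρ1 htail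
  simpa only [← integral_sq_mul_sq_div_sum_range_eq_add hmeas hnonneg, add_zero] using
    hgood.add hbad
end

section
/- Let Y_1, Y_2, ... be i.i.d. strictly positive random variables with E[Y_1^2] < ∞, and for each N let η_1^{(N)} = Y_1 / (Y_1 + ... + Y_N). Then lim_{N→∞} N^2 · E[(η_1^{(N)})^3] = 0. -/
/-!
Write `η = Y₀ / (Y₀ + T_N)` with `T_N = Y₁ + ⋯ + Y_{N-1}`, and fix `c > 0` with
`e^c r < 1`, where `r = E[e^{-Y₀}] < 1`. Off the event `{T_N ≤ cN}` we have
`η ≤ min 1 (Y₀ / (cN))`, while Chernoff's bound gives `P(T_N ≤ cN) ≤ e^{cN} r^{N-1}`,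
which beats `N²`. The remaining term `N² E[min 1 (Y₀ / (cN))³]` tends to `0` by dominated
convergence: the integrand is at most `Y₀² / c²` and at most `Y₀³ / (c³ N)`.
-/

open MeasureTheory ProbabilityTheory Filter Finset

lemma div_add_le_min_one_div {x T a : ℝ} (hx : 0 ≤ x) (ha : 0 < a) (haT : a < T) :
    x / (x + T) ≤ min 1 (x / a) :=
  le_min (div_le_one_of_le₀ (by linarith) (by linarith))
    (div_le_div_of_nonneg_left hx ha (by linarith))

lemma pow_mul_min_one_div_pow_succ_le {x n : ℝ} (hx : 0 ≤ x) (hn : 0 ≤ n) (k : ℕ) :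
    n ^ k * min 1 (x / n) ^ (k + 1) ≤ x ^ k := by
  have hm0 : 0 ≤ min 1 (x / n) := le_min zero_le_one (div_nonneg hx hn)
  have hnm : n * min 1 (x / n) ≤ x := by
    rcases hn.eq_or_lt with rfl | hn
    · simpa using hx
    · exact (mul_le_mul_of_nonneg_left (min_le_right _ _) hn.le).trans_eq
        (mul_div_cancel₀ x hn.ne')
  calc n ^ k * min 1 (x / n) ^ (k + 1)
      ≤ n ^ k * min 1 (x / n) ^ k :=
        mul_le_mul_of_nonneg_left (pow_le_pow_of_le_one hm0 (min_le_left _ _) k.le_succ)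
          (pow_nonneg hn k)
    _ = (n * min 1 (x / n)) ^ k := (mul_pow _ _ _).symm
    _ ≤ x ^ k := pow_le_pow_left₀ (mul_nonneg hn hm0) hnm k

lemma pow_mul_min_one_div_pow_succ_le_div {x n : ℝ} (hx : 0 ≤ x) (hn : 0 < n) (k : ℕ) :
    n ^ k * min 1 (x / n) ^ (k + 1) ≤ x ^ (k + 1) / n := by
  calc n ^ k * min 1 (x / n) ^ (k + 1)
      ≤ n ^ k * (x / n) ^ (k + 1) :=
        mul_le_mul_of_nonneg_left
          (pow_le_pow_left₀ (le_min zero_le_one (div_nonneg hx hn.le)) (min_le_right _ _) _)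
          (pow_nonneg hn.le k)
    _ = x ^ (k + 1) / n := by rw [div_pow, pow_succ n]; field_simp

lemma exists_pos_exp_mul_lt_one {r : ℝ} (hr0 : 0 < r) (hr1 : r < 1) :
    ∃ c > 0, Real.exp c * r < 1 := by
  obtain ⟨c, hc0, hc⟩ := exists_between (neg_pos.2 (Real.log_neg hr0 hr1))
  refine ⟨c, hc0, ?_⟩
  calc Real.exp c * r < Real.exp (-Real.log r) * r := by gcongr
    _ = 1 := by rw [Real.exp_neg, Real.exp_log hr0, inv_mul_cancel₀ hr0.ne']

namespace MeasureTheory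

variable {Ω : Type*} [MeasurableSpace Ω] {μ : Measure Ω}

lemma integral_pos_of_ae_pos [NeZero μ] {f : Ω → ℝ} (hf : Integrable f μ)
    (hpos : ∀ᵐ ω ∂μ, 0 < f ω) : 0 < ∫ ω, f ω ∂μ := by
  rw [integral_pos_iff_support_of_nonneg_ae (hpos.mono fun _ h => h.le) hf,
    pos_iff_ne_zero, Ne, Measure.measure_support_eq_zero_iff μ]
  intro hzero
  obtain ⟨ω, hω, hω'⟩ := (hpos.and hzero).exists
  exact hω.ne' hω'

end MeasureTheory

namespace ProbabilityTheory

variable {Ω : Type*} [MeasurableSpace Ω] {μ : Measure Ω}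

lemma integrable_exp_mul_of_nonpos_of_nonneg [IsFiniteMeasure μ] {X : Ω → ℝ}
    (hX : AEMeasurable X μ) (hX0 : ∀ᵐ ω ∂μ, 0 ≤ X ω) {t : ℝ} (ht : t ≤ 0) :
    Integrable (fun ω => Real.exp (t * X ω)) μ := by
  refine .of_mem_Icc 0 1 (hX.const_mul t).exp ?_
  filter_upwards [hX0] with ω hω
  exact ⟨(Real.exp_pos _).le, Real.exp_le_one_iff.2 (mul_nonpos_of_nonpos_of_nonneg ht hω)⟩

lemma mgf_lt_one_of_neg [IsProbabilityMeasure μ] {X : Ω → ℝ} (hX : AEMeasurable X μ)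
    (hpos : ∀ᵐ ω ∂μ, 0 < X ω) {t : ℝ} (ht : t < 0) : mgf X μ t < 1 := by
  have hint := integrable_exp_mul_of_nonpos_of_nonneg hX (hpos.mono fun _ h => h.le) ht.le
  have hgap : 0 < ∫ ω, (1 - Real.exp (t * X ω)) ∂μ := by
    refine integral_pos_of_ae_pos ((integrable_const 1).sub hint) ?_
    filter_upwards [hpos] with ω hω
    exact sub_pos.2 (Real.exp_lt_one_iff.2 (mul_neg_of_neg_of_pos ht hω))
  rw [integral_sub (integrable_const 1) hint, integral_const, probReal_univ, one_smul] at hgap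
  exact sub_pos.1 hgap

lemma measureReal_sum_le_le_exp_mul_mgf_pow [IsProbabilityMeasure μ] {ι : Type*}
    {X : ι → Ω → ℝ} (hmeas : ∀ i, Measurable (X i)) (hindep : iIndepFun X μ) {j : ι}
    (hident : ∀ i, IdentDistrib (X i) (X j) μ μ) (hX0 : ∀ i, ∀ᵐ ω ∂μ, 0 ≤ X i ω)
    (s : Finset ι) (ε : ℝ) {t : ℝ} (ht : t ≤ 0) :
    μ.real {ω | ∑ i ∈ s, X i ω ≤ ε} ≤ Real.exp (-t * ε) * mgf (X j) μ t ^ #s := by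
  have hint : Integrable (fun ω => Real.exp (t * (∑ i ∈ s, X i) ω)) μ :=
    hindep.integrable_exp_mul_sum hmeas fun i _ =>
      integrable_exp_mul_of_nonpos_of_nonneg (hmeas i).aemeasurable (hX0 i) ht
  have hchernoff := measure_le_le_exp_mul_mgf ε ht hint
  rw [hindep.mgf_sum hmeas, Finset.prod_eq_pow_card fun i _ =>
    mgf_congr_of_identDistrib _ _ (hident i) t] at hchernoff
  simpa only [Finset.sum_apply] using hchernoff

lemma integral_div_add_pow_le_add_measureReal [IsFiniteMeasure μ] {X T : Ω → ℝ}
    (hX : Measurable X) (hT : Measurable T) (hX0 : ∀ᵐ ω ∂μ, 0 ≤ X ω)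
    (hT0 : ∀ᵐ ω ∂μ, 0 ≤ T ω) {a : ℝ} (ha : 0 < a) (n : ℕ) :
    ∫ ω, (X ω / (X ω + T ω)) ^ n ∂μ ≤
      ∫ ω, min 1 (X ω / a) ^ n ∂μ + μ.real {ω | T ω ≤ a} := by
  have hratio : ∀ᵐ ω ∂μ, 0 ≤ X ω / (X ω + T ω) ∧ X ω / (X ω + T ω) ≤ 1 := by
    filter_upwards [hX0, hT0] with ω hx hT
    exact ⟨by positivity, div_le_one_of_le₀ (by linarith) (by linarith)⟩
  have hmin : ∀ᵐ ω ∂μ, 0 ≤ min 1 (X ω / a) ∧ min 1 (X ω / a) ≤ 1 := by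
    filter_upwards [hX0] with ω hx
    exact ⟨le_min zero_le_one (by positivity), min_le_left _ _⟩
  have hint_ratio : Integrable (fun ω => (X ω / (X ω + T ω)) ^ n) μ :=
    .of_mem_Icc 0 1 (by fun_prop) <|
      hratio.mono fun _ h => ⟨pow_nonneg h.1 n, pow_le_one₀ h.1 h.2⟩
  have hint_min : Integrable (fun ω => min 1 (X ω / a) ^ n) μ :=
    .of_mem_Icc 0 1 (by fun_prop) <|
      hmin.mono fun _ h => ⟨pow_nonneg h.1 n, pow_le_one₀ h.1 h.2⟩
  have hset : MeasurableSet {ω | T ω ≤ a} := measurableSet_le hT measurable_const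
  have hint_ind : Integrable ({ω | T ω ≤ a}.indicator (1 : Ω → ℝ)) μ :=
    (integrable_const 1).indicator hset
  rw [← integral_indicator_one hset, ← integral_add hint_min hint_ind]
  refine integral_mono_ae hint_ratio (hint_min.add hint_ind) ?_
  filter_upwards [hX0, hT0, hratio, hmin] with ω hx hT hη hm
  by_cases haT : ω ∈ {ω | T ω ≤ a}
  · rw [Set.indicator_of_mem haT]
    exact (pow_le_one₀ hη.1 hη.2).trans (le_add_of_nonneg_left (pow_nonneg hm.1 n))
  · rw [Set.indicator_of_notMem haT, add_zero]
    exact pow_le_pow_left₀ hη.1 (div_add_le_min_one_div hx ha (not_le.1 haT)) n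

lemma integral_div_sum_range_pow_le [IsProbabilityMeasure μ] {Y : ℕ → Ω → ℝ}
    (hmeas : ∀ i, Measurable (Y i)) (hindep : iIndepFun Y μ)
    (hident : ∀ i, IdentDistrib (Y i) (Y 0) μ μ) (hnonneg : ∀ i, ∀ᵐ ω ∂μ, 0 ≤ Y i ω)
    {c : ℝ} (hc : 0 < c) (n : ℕ) {N : ℕ} (hN : 1 ≤ N) :
    ∫ ω, (Y 0 ω / ∑ j ∈ range N, Y j ω) ^ n ∂μ ≤
      ∫ ω, min 1 (Y 0 ω / c / N) ^ n ∂μ +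
        (Real.exp c * mgf (Y 0) μ (-1)) ^ N / mgf (Y 0) μ (-1) := by
  have hr0 : 0 < mgf (Y 0) μ (-1) := mgf_pos <|
    integrable_exp_mul_of_nonpos_of_nonneg (hmeas 0).aemeasurable (hnonneg 0) (by norm_num)
  have hsplit : ∀ ω, ∑ j ∈ range N, Y j ω = Y 0 ω + ∑ j ∈ Ico 1 N, Y j ω :=
    fun ω => sum_range_eq_add_Ico _ hN
  have hsum_nonneg : ∀ᵐ ω ∂μ, 0 ≤ ∑ j ∈ Ico 1 N, Y j ω :=
    (ae_all_iff.2 hnonneg).mono fun ω hω => sum_nonneg fun i _ => hω i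
  have hchernoff := measureReal_sum_le_le_exp_mul_mgf_pow hmeas hindep hident hnonneg (Ico 1 N)
    (c * N) (t := -1) (by norm_num)
  simp_rw [hsplit, div_div]
  refine (integral_div_add_pow_le_add_measureReal (hmeas 0) (by fun_prop) (hnonneg 0)
    hsum_nonneg (a := c * N) (by positivity) n).trans
    (add_le_add le_rfl (hchernoff.trans_eq ?_))
  rw [Nat.card_Ico, pow_sub₀ _ hr0.ne' hN, mul_pow, ← Real.exp_nat_mul]
  ring_nf

lemma tendsto_pow_mul_integral_min_one_div_pow_succ [IsFiniteMeasure μ] {X : Ω → ℝ}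
    (hX : AEMeasurable X μ) (hX0 : ∀ᵐ ω ∂μ, 0 ≤ X ω) (k : ℕ)
    (hint : Integrable (fun ω => X ω ^ k) μ) :
    Tendsto (fun N : ℕ => (N : ℝ) ^ k * ∫ ω, min 1 (X ω / N) ^ (k + 1) ∂μ)
      atTop (nhds 0) := by
  simp_rw [← integral_const_mul]
  rw [← integral_zero Ω ℝ]
  refine tendsto_integral_of_dominated_convergence (fun ω => X ω ^ k) (fun N => by fun_prop) hint
    (fun N => ?_) ?_
  · filter_upwards [hX0] with ω hx
    rw [Real.norm_of_nonneg (by positivity)]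
    exact pow_mul_min_one_div_pow_succ_le hx N.cast_nonneg k
  · filter_upwards [hX0] with ω hx
    refine squeeze_zero' (.of_forall fun N => by positivity) ?_
      (tendsto_const_div_atTop_nhds_zero_nat (X ω ^ (k + 1)))
    filter_upwards [eventually_gt_atTop 0] with N hN
    exact pow_mul_min_one_div_pow_succ_le_div hx (Nat.cast_pos.2 hN) k

end ProbabilityTheory

/-- If `Y_1, Y_2, …` are i.i.d. positive with finite second moment and
`η_1^{(N)} = Y_1 / (Y_1 + ⋯ + Y_N)`, then `N² E[(η_1^{(N)})³] → 0`. -/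
theorem stmt_9 {Ω : Type*} [MeasurableSpace Ω] (P : Measure Ω) [IsProbabilityMeasure P]
    (Y : ℕ → Ω → ℝ) (hmeas : ∀ i, Measurable (Y i))
    (hindep : iIndepFun Y P)
    (hident : ∀ i, IdentDistrib (Y i) (Y 0) P P)
    (hpos : ∀ i, ∀ᵐ ω ∂P, 0 < Y i ω)
    (hsq : Integrable (fun ω => (Y 0 ω) ^ 2) P) :
    Tendsto (fun N : ℕ =>
        (N : ℝ) ^ 2 * ∫ ω, (Y 0 ω / ∑ j ∈ Finset.range N, Y j ω) ^ 3 ∂P)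
      atTop (nhds 0) := by
  have hnonneg : ∀ i, ∀ᵐ ω ∂P, 0 ≤ Y i ω := fun i => (hpos i).mono fun _ h => h.le
  set r := mgf (Y 0) P (-1)
  have hr0 : 0 < r := mgf_pos <|
    integrable_exp_mul_of_nonpos_of_nonneg (hmeas 0).aemeasurable (hnonneg 0) (by norm_num)
  obtain ⟨c, hc, hcr⟩ :=
    exists_pos_exp_mul_lt_one hr0 (mgf_lt_one_of_neg (hmeas 0).aemeasurable (hpos 0) (by norm_num))
  have hmin := tendsto_pow_mul_integral_min_one_div_pow_succ ((hmeas 0).div_const c).aemeasurable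
    ((hnonneg 0).mono fun ω hω => div_nonneg hω hc.le) 2
    ((hsq.div_const (c ^ 2)).congr (.of_forall fun ω => (div_pow _ _ _).symm))
  have htail :
      Tendsto (fun N : ℕ => (N : ℝ) ^ 2 * ((Real.exp c * r) ^ N / r)) atTop (nhds 0) := by
    simpa [mul_div_assoc] using
      (tendsto_pow_const_mul_const_pow_of_lt_one 2 (by positivity) hcr).div_const r
  refine squeeze_zero' (.of_forall fun N => mul_nonneg (by positivity) (integral_nonneg_of_ae ?_))
    ?_ (by simpa using hmin.add htail)
  · filter_upwards [ae_all_iff.2 hnonneg] with ω hω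
    exact pow_nonneg (div_nonneg (hω 0) (sum_nonneg fun i _ => hω i)) 3
  · filter_upwards [eventually_ge_atTop 1] with N hN
    rw [← mul_add]
    exact mul_le_mul_of_nonneg_left
      (integral_div_sum_range_pow_le hmeas hindep hident hnonneg hc 3 hN) (by positivity)
end

section
/- Let Y be a positive random variable satisfying lim_{y→∞} y^α P(Y ≥ y) = 1 with 1 < α < 2, and let I_p(u) = E[Y^p e^{-uY}] for an integer p ≥ 2. Then I_p(u) = α Γ(p - α) u^{α - p} + o(u^{α - p}) as u → 0^+. -/
/-!
Write `K s = (p s^(p-1) - s^p) e^(-s)` for the derivative of `s^p e^(-s)`. Then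
`(uY)^p e^(-uY) = ∫_(0, uY] K`, and Fubini turns `E[(uY)^p e^(-uY)]` into
`∫₀^∞ K(s) P(Y ≥ s/u) ds = u^α ∫₀^∞ K(s) s^(-α) φ(s/u) ds` with `φ y = y^α P(Y ≥ y)`.
The function `φ` is bounded on `(0, ∞)` and tends to `1`, so by dominated convergence the last
integral tends to `∫₀^∞ K(s) s^(-α) ds = p Γ(p-α) - Γ(p-α+1) = α Γ(p-α)`.
-/

open MeasureTheory Filter Real Set Topology

theorem integral_setIntegral_Ioc_eq_setIntegral_mul_measureReal_le {Ω : Type*}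
    [MeasurableSpace Ω] (P : Measure Ω) [IsFiniteMeasure P] {X : Ω → ℝ} (hX : Measurable X)
    {g : ℝ → ℝ} (hg : IntegrableOn g (Ioi 0)) :
    ∫ ω, (∫ t in Ioc 0 (X ω), g t) ∂P = ∫ t in Ioi 0, g t * P.real {ω | t ≤ X ω} := by
  set f : Ω → ℝ → ℝ := fun ω => (Iic (X ω)).indicator g
  have hS : MeasurableSet {z : Ω × ℝ | z.2 ≤ X z.1} :=
    measurableSet_le measurable_snd (hX.comp measurable_fst)
  have hf : Integrable (Function.uncurry f) (P.prod (volume.restrict (Ioi 0))) :=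
    (hg.comp_snd P).indicator hS
  calc ∫ ω, (∫ t in Ioc 0 (X ω), g t) ∂P
      = ∫ ω, (∫ t in Ioi 0, f ω t) ∂P := by
        refine integral_congr_ae (Eventually.of_forall fun ω => ?_)
        exact (setIntegral_indicator measurableSet_Iic).symm
    _ = ∫ t in Ioi 0, (∫ ω, f ω t ∂P) := integral_integral_swap hf
    _ = ∫ t in Ioi 0, g t * P.real {ω | t ≤ X ω} := by
        refine integral_congr_ae (Eventually.of_forall fun t => ?_)
        change ∫ ω, {ω | t ≤ X ω}.indicator (fun _ => g t) ω ∂P = _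
        rw [integral_indicator_const _ (measurableSet_le measurable_const hX), smul_eq_mul,
          mul_comm]

theorem hasDerivAt_pow_mul_exp_neg (p : ℕ) (x : ℝ) :
    HasDerivAt (fun s => s ^ p * exp (-s)) ((p * x ^ (p - 1) - x ^ p) * exp (-x)) x :=
  ((hasDerivAt_pow p x).mul (hasDerivAt_neg x).exp).congr_deriv (by ring)

theorem pow_mul_exp_neg_eq_setIntegral_Ioc {p : ℕ} (hp : p ≠ 0) {x : ℝ} (hx : 0 ≤ x) :
    x ^ p * exp (-x) = ∫ s in Ioc 0 x, (p * s ^ (p - 1) - s ^ p) * exp (-s) := by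
  rw [← intervalIntegral.integral_of_le hx,
    intervalIntegral.integral_eq_sub_of_hasDerivAt (fun s _ => hasDerivAt_pow_mul_exp_neg p s)
      ((by fun_prop : Continuous _).intervalIntegrable _ _)]
  simp [hp]

theorem kernel_mul_rpow_neg_eqOn (p : ℕ) (α : ℝ) :
    EqOn (fun s : ℝ => (p * s ^ (p - 1) - s ^ p) * exp (-s) * s ^ (-α))
      (fun s => p * (exp (-s) * s ^ ((p - α) - 1)) - exp (-s) * s ^ ((p - α + 1) - 1))
      (Ioi 0) := by
  intro s (hs : 0 < s)
  have h₂ : s ^ ((p - α + 1) - 1) = s ^ p * s ^ (-α) := by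
    rw [← rpow_natCast, ← rpow_add hs]; ring_nf
  rcases Nat.eq_zero_or_pos p with rfl | hp
  · simp
  have h₁ : s ^ ((p - α) - 1) = s ^ (p - 1) * s ^ (-α) := by
    rw [← rpow_natCast, ← rpow_add hs, Nat.cast_sub hp]; ring_nf
  simp only [h₁, h₂]
  ring

theorem integrableOn_kernel_mul_rpow_neg {p : ℕ} {α : ℝ} (hαp : α < p) :
    IntegrableOn (fun s : ℝ => (p * s ^ (p - 1) - s ^ p) * exp (-s) * s ^ (-α)) (Ioi 0) :=
  IntegrableOn.congr_fun (((GammaIntegral_convergent (sub_pos.2 hαp)).const_mul _).sub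
    (GammaIntegral_convergent (by linarith : 0 < (p : ℝ) - α + 1)))
    (kernel_mul_rpow_neg_eqOn p α).symm measurableSet_Ioi

theorem setIntegral_kernel_mul_rpow_neg {p : ℕ} {α : ℝ} (hαp : α < p) :
    ∫ s in Ioi 0, (p * s ^ (p - 1) - s ^ p) * exp (-s) * s ^ (-α) = α * Gamma (p - α) := by
  have hpα : 0 < p - α := sub_pos.2 hαp
  rw [setIntegral_congr_fun measurableSet_Ioi (kernel_mul_rpow_neg_eqOn p α),
    integral_sub ((GammaIntegral_convergent hpα).const_mul _)
      (GammaIntegral_convergent (by linarith : 0 < (p : ℝ) - α + 1)),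
    integral_const_mul, ← Gamma_eq_integral hpα, ← Gamma_eq_integral (by linarith),
    Gamma_add_one hpα.ne']
  ring

theorem integral_pow_mul_exp_neg_mul_eq {Ω : Type*} [MeasurableSpace Ω] (P : Measure Ω)
    [IsFiniteMeasure P] {Y : Ω → ℝ} (hY : Measurable Y) (hpos : ∀ᵐ ω ∂P, 0 < Y ω) {p : ℕ}
    (hp : p ≠ 0) (α : ℝ) {u : ℝ} (hu : 0 < u) :
    ∫ ω, Y ω ^ p * exp (-u * Y ω) ∂P = u ^ (α - p) * ∫ s in Ioi 0,
      (p * s ^ (p - 1) - s ^ p) * exp (-s) * s ^ (-α) *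
        ((s / u) ^ α * P.real {ω | s / u ≤ Y ω}) := by
  set K : ℝ → ℝ := fun s => (p * s ^ (p - 1) - s ^ p) * exp (-s)
  have hK : IntegrableOn K (Ioi 0) := by
    simpa using integrableOn_kernel_mul_rpow_neg (α := 0) (by positivity)
  calc ∫ ω, Y ω ^ p * exp (-u * Y ω) ∂P
      = ∫ ω, (u ^ p)⁻¹ * (∫ s in Ioc 0 (u * Y ω), K s) ∂P := by
        refine integral_congr_ae (hpos.mono fun ω hω => ?_)
        dsimp only
        rw [← pow_mul_exp_neg_eq_setIntegral_Ioc hp (by positivity), mul_pow, neg_mul]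
        field_simp
    _ = (u ^ p)⁻¹ * ∫ s in Ioi 0, K s * P.real {ω | s ≤ u * Y ω} := by
        rw [integral_const_mul,
          integral_setIntegral_Ioc_eq_setIntegral_mul_measureReal_le P (hY.const_mul u) hK]
    _ = _ := by
        rw [← integral_const_mul, ← integral_const_mul]
        refine setIntegral_congr_fun measurableSet_Ioi fun s (hs : 0 < s) => ?_
        simp only [K, div_le_iff₀' hu]
        rw [div_rpow hs.le hu.le, rpow_neg hs.le, rpow_sub hu, rpow_natCast]
        field_simp [(rpow_pos_of_pos hs α).ne', (rpow_pos_of_pos hu α).ne']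

theorem exists_abs_rpow_mul_le {T : ℝ → ℝ} {α l : ℝ} (hα : 0 ≤ α) (hT : ∀ y, |T y| ≤ 1)
    (h : Tendsto (fun y => y ^ α * T y) atTop (𝓝 l)) :
    ∃ C, ∀ y, 0 < y → |y ^ α * T y| ≤ C := by
  obtain ⟨M, hM⟩ := eventually_atTop.1 (h.abs.eventually (gt_mem_nhds (lt_add_one |l|)))
  refine ⟨max (|l| + 1) (max M 0 ^ α), fun y hy => ?_⟩
  rcases le_or_gt M y with hMy | hyM
  · exact (hM y hMy).le.trans (le_max_left _ _)
  calc |y ^ α * T y| = y ^ α * |T y| := by rw [abs_mul, abs_of_pos (rpow_pos_of_pos hy α)]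
    _ ≤ y ^ α := mul_le_of_le_one_right (rpow_nonneg hy.le α) (hT y)
    _ ≤ max M 0 ^ α := rpow_le_rpow hy.le (hyM.le.trans (le_max_left M 0)) hα
    _ ≤ _ := le_max_right _ _

theorem tendsto_setIntegral_mul_comp_div_nhdsGT_zero {W φ : ℝ → ℝ} {C l : ℝ}
    (hW : IntegrableOn W (Ioi 0)) (hφm : Measurable φ) (hφC : ∀ y, 0 < y → |φ y| ≤ C)
    (hφ : Tendsto φ atTop (𝓝 l)) :
    Tendsto (fun u => ∫ s in Ioi 0, W s * φ (s / u)) (𝓝[>] 0)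
      (𝓝 (∫ s in Ioi 0, W s * l)) := by
  refine tendsto_integral_filter_of_dominated_convergence (fun s => |W s| * C)
    (Eventually.of_forall fun u =>
      hW.1.mul (hφm.comp (measurable_div_const u)).aestronglyMeasurable)
    ?_ (hW.abs.mul_const C) ?_
  · filter_upwards [self_mem_nhdsWithin] with u (hu : 0 < u)
    refine (ae_restrict_iff' measurableSet_Ioi).2 (Eventually.of_forall fun s (hs : 0 < s) => ?_)
    rw [norm_mul, Real.norm_eq_abs, Real.norm_eq_abs]
    exact mul_le_mul_of_nonneg_left (hφC _ (div_pos hs hu)) (abs_nonneg _)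
  · refine (ae_restrict_iff' measurableSet_Ioi).2 (Eventually.of_forall fun s (hs : 0 < s) => ?_)
    exact tendsto_const_nhds.mul (hφ.comp (tendsto_inv_nhdsGT_zero.const_mul_atTop hs))

/-- If `Y > 0` with `y^α P(Y ≥ y) → 1` as `y → ∞`, `1 < α < 2`, then for every integer
`p ≥ 2`, `I_p(u) = E[Y^p e^{-uY}] = α Γ(p-α) u^(α-p) + o(u^(α-p))` as `u → 0⁺`. -/
theorem stmt_12 {Ω : Type*} [MeasurableSpace Ω] (P : Measure Ω) [IsProbabilityMeasure P]
    (α : ℝ) (hα1 : 1 < α) (hα2 : α < 2)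
    (Y : Ω → ℝ) (hmeas : Measurable Y) (hpos : ∀ᵐ ω ∂P, 0 < Y ω)
    (htail : Tendsto (fun y : ℝ => y ^ α * (P {ω | y ≤ Y ω}).toReal) atTop (nhds 1))
    (p : ℕ) (hp : 2 ≤ p) :
    Tendsto (fun u : ℝ =>
        ((∫ ω, (Y ω) ^ p * Real.exp (-u * Y ω) ∂P) -
            α * Real.Gamma ((p : ℝ) - α) * u ^ (α - (p : ℝ))) / u ^ (α - (p : ℝ)))
      (nhdsWithin 0 (Set.Ioi 0)) (nhds 0) := by
  have hαp : α < p := hα2.trans_le (by exact_mod_cast hp)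
  have htail_meas : Measurable fun y : ℝ => y ^ α * P.real {ω | y ≤ Y ω} :=
    (continuous_rpow_const (by linarith)).measurable.mul <| Antitone.measurable
      fun a b hab => measureReal_mono fun ω (h : b ≤ Y ω) => hab.trans h
  obtain ⟨C, hC⟩ := exists_abs_rpow_mul_le (by linarith)
    (fun y => abs_le.2 ⟨by linarith [measureReal_nonneg (μ := P) (s := {ω | y ≤ Y ω})],
      measureReal_le_one⟩) htail
  have hlim := tendsto_setIntegral_mul_comp_div_nhdsGT_zero
    (integrableOn_kernel_mul_rpow_neg hαp) htail_meas hC htail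
  simp only [mul_one, setIntegral_kernel_mul_rpow_neg hαp] at hlim
  have hlim' := hlim.sub_const (α * Gamma (p - α))
  rw [sub_self] at hlim'
  refine hlim'.congr' ?_
  filter_upwards [self_mem_nhdsWithin] with u (hu : 0 < u)
  rw [integral_pow_mul_exp_neg_mul_eq P hmeas hpos (by omega) α hu]
  field_simp [(rpow_pos_of_pos hu (α - p)).ne']
end

section
/- Let Y be a positive random variable satisfying lim_{y→∞} y · P(Y ≥ y) = 1, and let I_0(u) = E[e^{-uY}]. Then I_0(u) = 1 + u log u + o(u log u) as u → 0^+. -/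
/-!
With `G t = P(Y ≥ t)`, the layer-cake formula turns `1 - I₀(u)` into `u ∫₀^∞ G(t) e^{-ut} dt`, so
the claim is the Abelian estimate `∫₀^∞ G(t) e^{-ut} dt ~ log(1/u)` as `u → 0⁺`. Beyond some `M`
we have `c/t ≤ G(t) ≤ C/t` with `c < 1 < C` arbitrarily close to `1`. Integrating over `[M, δ/u]`,
where `e^{-ut} ≥ e^{-δ}`, gives the lower bound `c e^{-δ} log(δ/(Mu))`; splitting `(0, ∞)` at `M`
and `1/u` gives the upper bound `M + C log(1/(Mu)) + C/e`. Both are `log(1/u)` up to the factors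
`c e^{-δ}` and `C`.
-/

open MeasureTheory Filter Real Set
open scoped Topology

theorem intervalIntegral.integral_exp_neg_mul {u : ℝ} (hu : u ≠ 0) (y : ℝ) :
    ∫ t in (0 : ℝ)..y, exp (-u * t) = (1 - exp (-u * y)) / u := by
  rw [intervalIntegral.integral_comp_mul_left (fun t => exp t) (neg_ne_zero.2 hu), integral_exp,
    mul_zero, exp_zero, smul_eq_mul, inv_neg, eq_div_iff hu]
  field_simp
  ring

theorem measurable_measureReal_setOf_le {Ω : Type*} [MeasurableSpace Ω] (P : Measure Ω)
    [IsFiniteMeasure P] (Y : Ω → ℝ) :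
    Measurable fun t => P.real {ω | t ≤ Y ω} :=
  Antitone.measurable fun _ _ hst => measureReal_mono fun _ h => hst.trans h

theorem integral_exp_neg_mul_eq_one_sub_mul_integral_tail {Ω : Type*} [MeasurableSpace Ω]
    (P : Measure Ω) [IsProbabilityMeasure P] {Y : Ω → ℝ} (hY : AEMeasurable Y P)
    (hY_nonneg : 0 ≤ᵐ[P] Y) {u : ℝ} (hu : 0 < u) :
    ∫ ω, exp (-u * Y ω) ∂P = 1 - u * ∫ t in Ioi 0, P.real {ω | t ≤ Y ω} * exp (-u * t) := by
  have layercake := lintegral_comp_eq_lintegral_meas_le_mul P hY_nonneg hY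
    (g := fun t => exp (-u * t)) (fun _ _ => (by fun_prop : Continuous _).intervalIntegrable _ _)
    (.of_forall fun _ => (exp_pos _).le)
  simp_rw [intervalIntegral.integral_exp_neg_mul hu.ne'] at layercake
  have hexp_le_one : ∀ᵐ ω ∂P, exp (-u * Y ω) ≤ 1 := hY_nonneg.mono fun ω hω =>
    exp_le_one_iff.2 (mul_nonpos_of_nonpos_of_nonneg (neg_nonpos.2 hu.le) hω)
  have hexp_meas : AEStronglyMeasurable (fun ω => exp (-u * Y ω)) P := by fun_prop
  have hlhs : ∫ ω, (1 - exp (-u * Y ω)) / u ∂P = (1 - ∫ ω, exp (-u * Y ω) ∂P) / u := by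
    rw [integral_div, integral_sub (integrable_const 1)
      (.of_bound hexp_meas 1 (hexp_le_one.mono fun ω h => by rwa [norm_of_nonneg (exp_pos _).le])),
      integral_const, probReal_univ, one_smul]
  have hlayer : ∫ ω, (1 - exp (-u * Y ω)) / u ∂P
      = ∫ t in Ioi 0, P.real {ω | t ≤ Y ω} * exp (-u * t) := by
    rw [integral_eq_lintegral_of_nonneg_ae, integral_eq_lintegral_of_nonneg_ae, layercake]
    · congr 1
      refine lintegral_congr fun t => ?_
      rw [ENNReal.ofReal_mul measureReal_nonneg, ofReal_measureReal]
    · exact .of_forall fun t => mul_nonneg measureReal_nonneg (exp_pos _).le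
    · exact ((measurable_measureReal_setOf_le P Y).mul (by fun_prop)).aestronglyMeasurable
    · exact hexp_le_one.mono fun ω h => div_nonneg (sub_nonneg.2 h) hu.le
    · fun_prop
  rw [hlhs, div_eq_iff hu.ne'] at hlayer
  linarith

theorem tendsto_log_inv_nhdsGT_zero : Tendsto (fun u : ℝ => log u⁻¹) (𝓝[>] 0) atTop := by
  simp_rw [log_inv]
  exact tendsto_neg_atBot_atTop.comp tendsto_log_nhdsGT_zero

theorem tendsto_log_div_div_log_inv {a : ℝ} (ha : 0 < a) :
    Tendsto (fun u => log (a / u) / log u⁻¹) (𝓝[>] 0) (𝓝 1) := by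
  have h := (tendsto_log_inv_nhdsGT_zero.inv_tendsto_atTop.const_mul (log a)).add_const 1
  rw [mul_zero, zero_add] at h
  refine h.congr' ?_
  filter_upwards [Ioo_mem_nhdsGT one_pos] with u ⟨hu0, hu1⟩
  have hlog : log u⁻¹ ≠ 0 := (log_pos (one_lt_inv₀ hu0 |>.2 hu1)).ne'
  rw [Pi.inv_apply, div_eq_mul_inv a, log_mul ha.ne' (inv_ne_zero hu0.ne'), add_div, div_self hlog,
    div_eq_mul_inv (log a)]

section LaplaceTail

variable {G : ℝ → ℝ} {u M : ℝ}

theorem integrableOn_mul_exp_neg_mul (hG : AEStronglyMeasurable G) (hG_bdd : ∀ t, |G t| ≤ 1)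
    (hu : 0 < u) (a : ℝ) : IntegrableOn (fun t => G t * exp (-u * t)) (Ioi a) := by
  refine (exp_neg_integrableOn_Ioi a hu).mono' (hG.restrict.mul (by fun_prop))
    (.of_forall fun t => ?_)
  rw [norm_mul, norm_of_nonneg (exp_pos _).le]
  exact mul_le_of_le_one_left (exp_pos _).le (hG_bdd t)

theorem intervalIntegrable_inv_of_pos {a b : ℝ} (ha : 0 < a) (hb : 0 < b) :
    IntervalIntegrable (fun t : ℝ => t⁻¹) volume a b :=
  intervalIntegrable_inv_iff.2 (.inr (notMem_uIcc_of_lt ha hb))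

theorem le_integral_mul_exp_neg_mul {c δ : ℝ} (hM : 0 < M) (hu : 0 < u) (hMδ : M ≤ δ / u)
    (hG_nonneg : ∀ t, 0 ≤ G t) (hc : ∀ t, M ≤ t → c ≤ t * G t)
    (hint : IntegrableOn (fun t => G t * exp (-u * t)) (Ioi 0)) :
    c * exp (-δ) * log (δ / M / u) ≤ ∫ t in Ioi 0, G t * exp (-u * t) := by
  have hδu : 0 < δ / u := hM.trans_le hMδ
  calc c * exp (-δ) * log (δ / M / u) = ∫ t in M..δ / u, c * exp (-δ) * t⁻¹ := by
        rw [intervalIntegral.integral_const_mul, integral_inv_of_pos hM hδu, div_right_comm]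
    _ ≤ ∫ t in M..δ / u, G t * exp (-u * t) := by
        refine intervalIntegral.integral_mono_on hMδ
          ((intervalIntegrable_inv_of_pos hM hδu).const_mul _)
          ((intervalIntegrable_iff_integrableOn_Ioc_of_le hMδ).2
            (hint.mono_set fun t ht => hM.trans ht.1)) fun t ht => ?_
        have ht0 : 0 < t := hM.trans_le ht.1
        have hut : u * t ≤ δ := by rw [← le_div_iff₀' hu]; exact ht.2
        calc c * exp (-δ) * t⁻¹ = c / t * exp (-δ) := by ring
          _ ≤ G t * exp (-δ) := by
              gcongr
              rw [div_le_iff₀ ht0, mul_comm]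
              exact hc t ht.1
          _ ≤ G t * exp (-u * t) := by
              gcongr
              · exact hG_nonneg t
              · linarith
    _ ≤ ∫ t in Ioi 0, G t * exp (-u * t) := by
        rw [intervalIntegral.integral_of_le hMδ]
        exact setIntegral_mono_set hint
          (.of_forall fun t => mul_nonneg (hG_nonneg t) (exp_pos _).le)
          (Eventually.of_forall fun t ht => hM.trans ht.1)

theorem setIntegral_Ioi_inv_mul_exp_neg_mul_le {C : ℝ} (hu : 0 < u) (hC0 : 0 ≤ C)
    (hC : ∀ t, u⁻¹ ≤ t → t * G t ≤ C)
    (hint : IntegrableOn (fun t => G t * exp (-u * t)) (Ioi u⁻¹)) :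
    ∫ t in Ioi u⁻¹, G t * exp (-u * t) ≤ C * exp (-1) := by
  calc ∫ t in Ioi u⁻¹, G t * exp (-u * t) ≤ ∫ t in Ioi u⁻¹, C * u * exp (-u * t) := by
        refine setIntegral_mono_on hint ((exp_neg_integrableOn_Ioi _ hu).const_mul _)
          measurableSet_Ioi fun t ht => ?_
        have ht0 : 0 < t := (inv_pos.2 hu).trans ht
        gcongr
        calc G t ≤ C / t := by rw [le_div_iff₀ ht0, mul_comm]; exact hC t ht.le
          _ ≤ C * u := by
            rw [div_eq_mul_inv]
            gcongr
            exact inv_le_of_inv_le₀ hu ht.le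
    _ = C * exp (-1) := by
      rw [integral_const_mul, integral_exp_mul_Ioi (neg_neg_iff_pos.2 hu)]
      field_simp

theorem integral_mul_exp_neg_mul_le {C : ℝ} (hM : 0 < M) (hu : 0 < u) (hMu : M ≤ u⁻¹)
    (hG_nonneg : ∀ t, 0 ≤ G t) (hG_le_one : ∀ t, G t ≤ 1) (hC : ∀ t, M ≤ t → t * G t ≤ C)
    (hint : IntegrableOn (fun t => G t * exp (-u * t)) (Ioi 0)) :
    ∫ t in Ioi 0, G t * exp (-u * t) ≤ M + C * log (M⁻¹ / u) + C * exp (-1) := by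
  have hexp_le_one : ∀ t, 0 ≤ t → exp (-u * t) ≤ 1 := fun t ht =>
    exp_le_one_iff.2 (mul_nonpos_of_nonpos_of_nonneg (neg_nonpos.2 hu.le) ht)
  have hinv_pos : 0 < u⁻¹ := inv_pos.2 hu
  have hint_M : IntegrableOn (fun t => G t * exp (-u * t)) (Ioi M) :=
    hint.mono_set (Ioi_subset_Ioi hM.le)
  have hint_u : IntegrableOn (fun t => G t * exp (-u * t)) (Ioi u⁻¹) :=
    hint.mono_set (Ioi_subset_Ioi hinv_pos.le)
  rw [← intervalIntegral.integral_interval_add_Ioi hint hint_M,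
    ← intervalIntegral.integral_interval_add_Ioi hint_M hint_u]
  have hhead : ∫ t in (0 : ℝ)..M, G t * exp (-u * t) ≤ M := by
    calc ∫ t in (0 : ℝ)..M, G t * exp (-u * t) ≤ ∫ _ in (0 : ℝ)..M, (1 : ℝ) :=
          intervalIntegral.integral_mono_on hM.le
            ((intervalIntegrable_iff_integrableOn_Ioc_of_le hM.le).2
              (hint.mono_set Ioc_subset_Ioi_self))
            intervalIntegrable_const fun t ht =>
              mul_le_one₀ (hG_le_one t) (exp_pos _).le (hexp_le_one t ht.1)
      _ = M := by simp
  have hmiddle : ∫ t in M..u⁻¹, G t * exp (-u * t) ≤ C * log (M⁻¹ / u) := by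
    calc ∫ t in M..u⁻¹, G t * exp (-u * t) ≤ ∫ t in M..u⁻¹, C * t⁻¹ :=
          intervalIntegral.integral_mono_on hMu
            ((intervalIntegrable_iff_integrableOn_Ioc_of_le hMu).2
              (hint.mono_set fun t ht => hM.trans ht.1))
            ((intervalIntegrable_inv_of_pos hM hinv_pos).const_mul _) fun t ht => by
              have ht0 : 0 < t := hM.trans_le ht.1
              calc G t * exp (-u * t) ≤ G t := mul_le_of_le_one_right (hG_nonneg t)
                    (hexp_le_one t ht0.le)
                _ ≤ C * t⁻¹ := by
                  rw [← div_eq_mul_inv, le_div_iff₀ ht0, mul_comm]; exact hC t ht.1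
      _ = C * log (M⁻¹ / u) := by
        rw [intervalIntegral.integral_const_mul, integral_inv_of_pos hM hinv_pos, div_eq_mul_inv,
          div_eq_mul_inv, mul_comm u⁻¹]
  have htail := setIntegral_Ioi_inv_mul_exp_neg_mul_le hu
    ((mul_nonneg hM.le (hG_nonneg M)).trans (hC M le_rfl)) (fun t ht => hC t (hMu.trans ht)) hint_u
  linarith

theorem eventually_lt_integral_mul_exp_neg_mul_div_log_inv (hG_nonneg : ∀ t, 0 ≤ G t)
    (hint : ∀ u, 0 < u → IntegrableOn (fun t => G t * exp (-u * t)) (Ioi 0))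
    (htail : Tendsto (fun t => t * G t) atTop (𝓝 1)) {a : ℝ} (ha : a < 1) :
    ∀ᶠ u in 𝓝[>] 0, a < (∫ t in Ioi 0, G t * exp (-u * t)) / log u⁻¹ := by
  obtain ⟨c, hac, hc1⟩ := exists_between ha
  obtain ⟨M, hM⟩ := eventually_atTop.1
    ((htail.eventually (eventually_ge_nhds hc1)).and (eventually_gt_atTop 0))
  have hM0 : 0 < M := (hM M le_rfl).2
  have hexp : Tendsto (fun δ => c * exp (-δ)) (𝓝[>] 0) (𝓝 c) := by
    simpa using ((by fun_prop : Continuous fun δ : ℝ => c * exp (-δ)).tendsto 0).mono_left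
      nhdsWithin_le_nhds
  obtain ⟨δ, hδa, hδ0⟩ :=
    ((hexp.eventually (eventually_gt_nhds hac)).and self_mem_nhdsWithin).exists
  have hlower := (tendsto_log_div_div_log_inv (div_pos hδ0 hM0)).const_mul (c * exp (-δ))
  rw [mul_one] at hlower
  filter_upwards [hlower.eventually (eventually_gt_nhds hδa),
    tendsto_log_inv_nhdsGT_zero.eventually_gt_atTop 0,
    Ioo_mem_nhdsGT (div_pos hδ0 hM0)] with u hau hlog ⟨hu, huM⟩
  have hMδ : M ≤ δ / u := by rw [le_div_iff₀ hu, mul_comm]; exact ((lt_div_iff₀ hM0).1 huM).le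
  rw [← mul_div_assoc] at hau
  exact hau.trans_le (div_le_div_of_nonneg_right (le_integral_mul_exp_neg_mul hM0 hu hMδ
    hG_nonneg (fun t ht => (hM t ht).1) (hint u hu)) hlog.le)

theorem eventually_integral_mul_exp_neg_mul_div_log_inv_lt (hG_nonneg : ∀ t, 0 ≤ G t)
    (hG_le_one : ∀ t, G t ≤ 1)
    (hint : ∀ u, 0 < u → IntegrableOn (fun t => G t * exp (-u * t)) (Ioi 0))
    (htail : Tendsto (fun t => t * G t) atTop (𝓝 1)) {b : ℝ} (hb : 1 < b) :
    ∀ᶠ u in 𝓝[>] 0, (∫ t in Ioi 0, G t * exp (-u * t)) / log u⁻¹ < b := by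
  obtain ⟨C, hC1, hCb⟩ := exists_between hb
  obtain ⟨M, hM⟩ := eventually_atTop.1
    ((htail.eventually (eventually_le_nhds hC1)).and (eventually_gt_atTop 0))
  have hM0 : 0 < M := (hM M le_rfl).2
  have hupper := (tendsto_log_inv_nhdsGT_zero.inv_tendsto_atTop.const_mul (M + C * exp (-1))).add
    ((tendsto_log_div_div_log_inv (inv_pos.2 hM0)).const_mul C)
  rw [mul_zero, zero_add, mul_one] at hupper
  filter_upwards [hupper.eventually (eventually_lt_nhds hCb),
    tendsto_log_inv_nhdsGT_zero.eventually_gt_atTop 0,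
    Ioo_mem_nhdsGT (inv_pos.2 hM0)] with u hub hlog ⟨hu, huM⟩
  have hMu : M ≤ u⁻¹ := (le_inv_comm₀ hu hM0).1 huM.le
  refine (div_le_div_of_nonneg_right (integral_mul_exp_neg_mul_le hM0 hu hMu hG_nonneg
    hG_le_one (fun t ht => (hM t ht).1) (hint u hu)) hlog.le).trans_lt ?_
  rw [Pi.inv_apply] at hub
  convert hub using 1
  ring

theorem tendsto_integral_mul_exp_neg_mul_div_log_inv (hG : Measurable G)
    (hG_nonneg : ∀ t, 0 ≤ G t) (hG_le_one : ∀ t, G t ≤ 1)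
    (htail : Tendsto (fun t => t * G t) atTop (𝓝 1)) :
    Tendsto (fun u => (∫ t in Ioi 0, G t * exp (-u * t)) / log u⁻¹) (𝓝[>] 0) (𝓝 1) := by
  have hint : ∀ u, 0 < u → IntegrableOn (fun t => G t * exp (-u * t)) (Ioi 0) := fun u hu =>
    integrableOn_mul_exp_neg_mul hG.aestronglyMeasurable
      (fun t => abs_le.2 ⟨by linarith [hG_nonneg t], hG_le_one t⟩) hu 0
  exact tendsto_order.2
    ⟨fun _ ha => eventually_lt_integral_mul_exp_neg_mul_div_log_inv hG_nonneg hint htail ha,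
      fun _ hb => eventually_integral_mul_exp_neg_mul_div_log_inv_lt hG_nonneg hG_le_one hint
        htail hb⟩

end LaplaceTail

/-- If `Y > 0` with `y · P(Y ≥ y) → 1` as `y → ∞`, then the Laplace transform satisfies
`I_0(u) = 1 + u log u + o(u log u)` as `u → 0⁺`. -/
theorem stmt_13 {Ω : Type*} [MeasurableSpace Ω] (P : Measure Ω) [IsProbabilityMeasure P]
    (Y : Ω → ℝ) (hmeas : Measurable Y) (hpos : ∀ᵐ ω ∂P, 0 < Y ω)
    (htail : Tendsto (fun y : ℝ => y * (P {ω | y ≤ Y ω}).toReal) atTop (nhds 1)) :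
    Tendsto (fun u : ℝ =>
        ((∫ ω, Real.exp (-u * Y ω) ∂P) - (1 + u * Real.log u)) / (u * Real.log u))
      (nhdsWithin 0 (Set.Ioi 0)) (nhds 0) := by
  have hlim := (tendsto_integral_mul_exp_neg_mul_div_log_inv
    (measurable_measureReal_setOf_le P Y) (fun _ => measureReal_nonneg)
    (fun _ => measureReal_le_one) htail).sub_const 1
  rw [sub_self] at hlim
  refine hlim.congr' ?_
  filter_upwards [Ioo_mem_nhdsGT one_pos] with u ⟨hu0, hu1⟩
  have hlog : log u ≠ 0 := (log_neg hu0 hu1).ne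
  rw [integral_exp_neg_mul_eq_one_sub_mul_integral_tail P hmeas.aemeasurable
    (hpos.mono fun _ h => h.le) hu0, log_inv]
  generalize ∫ t in Ioi 0, P.real {ω | t ≤ Y ω} * exp (-u * t) = L
  field_simp
  ring
end

section
/- For z → 0^+, the exponential integral satisfies ∫_z^∞ (e^{-x}/x) dx = -γ - log z - ∑_{m≥1} (-1)^m z^m/(m · m!), where γ is the Euler–Mascheroni constant. In particular, ∫_z^∞ (e^{-x}/x) dx + log z → -γ as z → 0^+. -/
/-!
Since `Γ'(1) = -γ`, we have `∫_0^∞ log t e^{-t} dt = -γ`. Split this integral at `z` and integrate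
by parts on both pieces, using the antiderivative `-e^{-t} log t` on `(z, ∞)` and
`(1 - e^{-t}) log t` (which vanishes at `0`) on `(0, z]`. The boundary terms add up to `log z`, so
`∫_z^∞ e^{-x}/x dx + log z = -γ - ∫_0^z (e^{-t} - 1)/t dt`. Integrating the exponential series
termwise gives the series, and `|(e^{-t} - 1)/t| ≤ 1` gives the limit.
-/

open MeasureTheory Real Filter

namespace ExponentialIntegral

open Set Asymptotics

lemma integrableOn_exp_neg_div_self_Ioi {z : ℝ} (hz : 0 < z) :
    IntegrableOn (fun x => exp (-x) / x) (Ioi z) := by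
  refine ((exp_neg_integrableOn_Ioi z one_pos).div_const z).mono' ?_ ?_
  · exact (by fun_prop : Measurable fun x : ℝ => exp (-x) / x).aestronglyMeasurable
  · refine (ae_restrict_iff' measurableSet_Ioi).2 (ae_of_all _ fun x hx => ?_)
    have hx0 : 0 < x := hz.trans hx
    rw [norm_of_nonneg (by positivity), neg_mul, one_mul]
    exact div_le_div_of_nonneg_left (exp_pos _).le hz hx.le

lemma integrableOn_log_mul_exp_neg_Ioi :
    IntegrableOn (fun t => log t * exp (-t)) (Ioi 0) := by
  have hconv := (mellin_hasDerivAt_of_isBigO_rpow (E := ℂ) (s := 1) (a := 2) (b := 0)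
    (f := fun t => ((exp (-t) : ℝ) : ℂ)) ?_ ?_ (by norm_num) ?_ (by norm_num)).1
  · exact IntegrableOn.congr_fun hconv.re (fun t _ => by simp [-Complex.ofReal_exp])
      measurableSet_Ioi
  · exact (Complex.continuous_ofReal.comp (continuous_exp.comp continuous_neg)).continuousOn
      |>.locallyIntegrableOn measurableSet_Ioi
  · rw [← isBigO_norm_left]
    simpa only [Complex.norm_real, isBigO_norm_left, neg_one_mul] using
      (isLittleO_exp_neg_mul_rpow_atTop zero_lt_one _).isBigO
  · simp_rw [neg_zero, rpow_zero]
    refine isBigO_const_of_tendsto (y := (1 : ℂ)) ?_ one_ne_zero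
    have : Continuous fun t : ℝ => Complex.exp (-t) := by fun_prop
    simpa using (this.tendsto 0).mono_left nhdsWithin_le_nhds

lemma integral_log_mul_exp_neg_Ioi :
    ∫ t in Ioi 0, log t * exp (-t) = -eulerMascheroniConstant := by
  have hGamma : Complex.Gamma =ᶠ[nhds 1] Complex.GammaIntegral := by
    filter_upwards [(isOpen_lt continuous_const Complex.continuous_re).mem_nhds
      (by norm_num : (0 : ℝ) < (1 : ℂ).re)] with s hs using Complex.Gamma_eq_integral hs
  have hderiv := ((Complex.hasDerivAt_GammaIntegral (by norm_num : (0 : ℝ) < (1 : ℂ).re)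
    ).congr_of_eventuallyEq hGamma).unique Complex.hasDerivAt_Gamma_one
  simp_rw [sub_self, Complex.cpow_zero, one_mul] at hderiv
  exact_mod_cast hderiv

lemma tendsto_exp_neg_mul_log_atTop : Tendsto (fun t => exp (-t) * log t) atTop (nhds 0) := by
  refine squeeze_zero_norm' ?_ (tendsto_pow_mul_exp_neg_atTop_nhds_zero 1)
  filter_upwards [eventually_ge_atTop 1] with t ht
  rw [norm_mul, norm_of_nonneg (exp_pos _).le, norm_of_nonneg (log_nonneg ht), pow_one, mul_comm t]
  exact mul_le_mul_of_nonneg_left (log_le_self (by linarith)) (exp_pos _).le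

lemma integral_Ioi_log_mul_exp_neg {z : ℝ} (hz : 0 < z) :
    ∫ t in Ioi z, log t * exp (-t) = exp (-z) * log z + ∫ x in Ioi z, exp (-x) / x := by
  have hlog := integrableOn_log_mul_exp_neg_Ioi.mono_set (Ioi_subset_Ioi hz.le)
  have hexp_div := integrableOn_exp_neg_div_self_Ioi hz
  have hparts := integral_Ioi_of_hasDerivAt_of_tendsto' (m := 0) (a := z)
    (f := fun t => -(exp (-t) * log t)) (f' := fun t => log t * exp (-t) - exp (-t) / t)
    (fun x hx => ?_) (hlog.sub hexp_div) (by simpa using tendsto_exp_neg_mul_log_atTop.neg)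
  · rw [integral_sub hlog hexp_div] at hparts
    linarith
  · have hx0 : x ≠ 0 := (hz.trans_le hx).ne'
    refine ((hasDerivAt_neg x).exp.fun_mul (hasDerivAt_log hx0)).fun_neg.congr_deriv ?_
    field_simp
    ring

/-- Continuous on all of `ℝ` because `log 0 = 0` and `|1 - e^{-t}| ≤ 2|t|` near `0`. -/
lemma continuous_one_sub_exp_neg_mul_log : Continuous fun t => (1 - exp (-t)) * log t := by
  refine continuous_iff_continuousAt.2 fun x => ?_
  rcases eq_or_ne x 0 with rfl | hx
  · have hbound : ∀ᶠ t in nhds (0 : ℝ), ‖(1 - exp (-t)) * log t‖ ≤ 2 * |t * log t| := by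
      filter_upwards [Icc_mem_nhds neg_one_lt_zero one_pos] with t ht
      rw [norm_mul, abs_mul, ← mul_assoc, norm_eq_abs, abs_sub_comm, norm_eq_abs, ← abs_neg t]
      gcongr
      exact abs_exp_sub_one_le (by rw [abs_neg, abs_le]; exact ht)
    have hlim : Tendsto (fun t => 2 * |t * log t|) (nhds 0) (nhds 0) := by
      simpa using ((continuous_abs.comp continuous_mul_log).const_mul 2).tendsto 0
    simpa [ContinuousAt] using squeeze_zero_norm' hbound hlim
  · exact (by fun_prop : Continuous fun t => 1 - exp (-t)).continuousAt.mul
      (continuousAt_log hx)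

lemma abs_exp_neg_sub_one_div_le_one {t : ℝ} (ht : 0 ≤ t) : |(exp (-t) - 1) / t| ≤ 1 := by
  rcases ht.eq_or_lt with rfl | ht
  · simp
  have hexp : exp (-t) ≤ 1 := exp_le_one_iff.2 (by linarith)
  rw [abs_div, abs_of_pos ht, div_le_one ht, abs_of_nonpos (by linarith)]
  linarith [add_one_le_exp (-t)]

lemma intervalIntegrable_exp_neg_sub_one_div {z : ℝ} (hz : 0 ≤ z) :
    IntervalIntegrable (fun t => (exp (-t) - 1) / t) volume 0 z := by
  refine (intervalIntegrable_const (c := (1 : ℝ))).mono_fun'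
    (by fun_prop : Measurable fun t : ℝ => (exp (-t) - 1) / t).aestronglyMeasurable ?_
  refine (ae_restrict_iff' measurableSet_uIoc).2 (ae_of_all _ fun t ht => ?_)
  rw [uIoc_of_le hz] at ht
  exact abs_exp_neg_sub_one_div_le_one ht.1.le

lemma integral_log_mul_exp_neg {z : ℝ} (hz : 0 ≤ z) :
    ∫ t in 0..z, log t * exp (-t) =
      (1 - exp (-z)) * log z + ∫ t in 0..z, (exp (-t) - 1) / t := by
  have hlog : IntervalIntegrable (fun t => log t * exp (-t)) volume 0 z :=
    (intervalIntegrable_iff_integrableOn_Ioc_of_le hz).2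
      (integrableOn_log_mul_exp_neg_Ioi.mono_set Ioc_subset_Ioi_self)
  have hg := intervalIntegrable_exp_neg_sub_one_div hz
  have hparts := intervalIntegral.integral_eq_sub_of_hasDerivAt_of_le hz
    continuous_one_sub_exp_neg_mul_log.continuousOn (fun x hx => ?_) (hlog.sub hg)
  · rw [intervalIntegral.integral_sub hlog hg] at hparts
    simp only [neg_zero, exp_zero, sub_self, log_zero, mul_zero, sub_zero] at hparts
    linarith
  · have hx0 : x ≠ 0 := hx.1.ne'
    refine (((hasDerivAt_neg x).exp.const_sub 1).fun_mul (hasDerivAt_log hx0)).congr_deriv ?_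
    field_simp
    ring

lemma integral_Ioi_exp_neg_div_add_log {z : ℝ} (hz : 0 < z) :
    (∫ x in Ioi z, exp (-x) / x) + log z =
      -eulerMascheroniConstant - ∫ t in 0..z, (exp (-t) - 1) / t := by
  have hsplit := intervalIntegral.integral_interval_add_Ioi integrableOn_log_mul_exp_neg_Ioi
    (integrableOn_log_mul_exp_neg_Ioi.mono_set (Ioi_subset_Ioi hz.le))
  rw [integral_log_mul_exp_neg hz.le, integral_Ioi_log_mul_exp_neg hz,
    integral_log_mul_exp_neg_Ioi] at hsplit
  linarith

lemma tendsto_integral_exp_neg_sub_one_div :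
    Tendsto (fun z => ∫ t in 0..z, (exp (-t) - 1) / t) (nhdsWithin 0 (Ioi 0)) (nhds 0) := by
  have hbound : ∀ᶠ z in nhdsWithin 0 (Ioi 0), ‖∫ t in 0..z, (exp (-t) - 1) / t‖ ≤ z := by
    filter_upwards [self_mem_nhdsWithin] with z (hz : 0 < z)
    simpa [abs_of_pos hz] using intervalIntegral.norm_integral_le_of_norm_le_const
      (C := 1) (a := 0) (b := z) (f := fun t => (exp (-t) - 1) / t) fun t ht => by
        rw [uIoc_of_le hz.le] at ht
        exact abs_exp_neg_sub_one_div_le_one ht.1.le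
  exact squeeze_zero_norm' hbound (tendsto_nhdsWithin_of_tendsto_nhds tendsto_id)

lemma hasSum_exp_neg_sub_one_div {t : ℝ} (ht : t ≠ 0) :
    HasSum (fun m : ℕ => (-1) ^ (m + 1) * t ^ m / (m + 1).factorial) ((exp (-t) - 1) / t) := by
  have hexp := (hasSum_nat_add_iff' 1).2 (NormedSpace.expSeries_div_hasSum_exp (-t))
  rw [← exp_eq_exp_ℝ] at hexp
  have hterm : ∀ m : ℕ, (-1 : ℝ) ^ (m + 1) * t ^ m / (m + 1).factorial =
      (-t) ^ (m + 1) / (m + 1).factorial / t := fun m => by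
    rw [neg_pow]
    field_simp
    ring
  simp_rw [hterm]
  simpa using hexp.div_const t

lemma hasSum_integral_exp_neg_sub_one_div {z : ℝ} (hz : 0 ≤ z) :
    HasSum (fun m : ℕ => (-1) ^ (m + 1) * z ^ (m + 1) / ((m + 1) * (m + 1).factorial))
      (∫ t in 0..z, (exp (-t) - 1) / t) := by
  have hsum := intervalIntegral.hasSum_integral_of_dominated_convergence
    (μ := volume) (a := 0) (b := z)
    (F := fun (m : ℕ) (t : ℝ) => (-1) ^ (m + 1) * t ^ m / (m + 1).factorial)
    (fun m _ => z ^ m / m.factorial) (fun m => by fun_prop) (fun m => ae_of_all _ fun t ht => ?_)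
    (ae_of_all _ fun _ _ => Real.summable_pow_div_factorial z) intervalIntegrable_const
    (ae_of_all _ fun t ht => hasSum_exp_neg_sub_one_div ?_)
  · have hterm : ∀ m : ℕ, ∫ t in 0..z, (-1) ^ (m + 1) * t ^ m / (m + 1).factorial =
        (-1) ^ (m + 1) * z ^ (m + 1) / ((m + 1) * (m + 1).factorial) := fun m => by
      rw [intervalIntegral.integral_div, intervalIntegral.integral_const_mul, integral_pow,
        zero_pow m.succ_ne_zero, sub_zero]
      field_simp
    simpa only [hterm] using hsum
  · rw [uIoc_of_le hz] at ht
    rw [norm_div, norm_mul, norm_pow, norm_neg, norm_one, one_pow, one_mul, norm_pow,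
      norm_of_nonneg ht.1.le, Real.norm_natCast]
    gcongr
    exacts [ht.1.le, ht.2, m.le_succ]
  · rw [uIoc_of_le hz] at ht
    exact ht.1.ne'

end ExponentialIntegral

open ExponentialIntegral

/-- Expansion of the exponential integral near `0`:
`∫_z^∞ e^(-x)/x dx = -γ - log z - ∑_{m ≥ 1} (-1)^m z^m / (m · m!)`, and in particular
`∫_z^∞ e^(-x)/x dx + log z → -γ` as `z → 0⁺`. -/
theorem stmt_15 :
    (∀ z : ℝ, 0 < z →
      (∫ x in Set.Ioi z, Real.exp (-x) / x) =
        -Real.eulerMascheroniConstant - Real.log z -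
          ∑' m : ℕ, (-1 : ℝ) ^ (m + 1) * z ^ (m + 1) /
            ((m + 1) * (Nat.factorial (m + 1)))) ∧
    Tendsto (fun z : ℝ => (∫ x in Set.Ioi z, Real.exp (-x) / x) + Real.log z)
      (nhdsWithin 0 (Set.Ioi 0)) (nhds (-Real.eulerMascheroniConstant)) := by
  refine ⟨fun z hz => ?_, ?_⟩
  · rw [(hasSum_integral_exp_neg_sub_one_div hz.le).tsum_eq]
    linarith [integral_Ioi_exp_neg_div_add_log hz]
  · have hlim := (tendsto_const_nhds (x := -eulerMascheroniConstant)).sub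
      tendsto_integral_exp_neg_sub_one_div
    rw [sub_zero] at hlim
    exact hlim.congr' (eventually_mem_nhdsWithin.mono fun z hz =>
      (integral_Ioi_exp_neg_div_add_log hz).symm)
end
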